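/- Let (A₀ⁿ)_{n∈ℕ} and (A₁ⁿ)_{n∈ℕ} be sequences of Banach spaces such that for each n, (A₀ⁿ, A₁ⁿ) is a compatible couple. Let ℓ₁({A₀ⁿ}) be the ℓ₁-direct sum of the A₀ⁿ and ℓ_∞({A₁ⁿ}) the ℓ_∞-direct sum of the A₁ⁿ. Then for all x = (x_i) ∈ ℓ₁({A₀ⁿ}) + ℓ_∞({A₁ⁿ}) and all t > 0, K_t(x; ℓ₁({A₀ⁿ}), ℓ_∞({A₁ⁿ})) = sup { Σ_i K_{t_i}(x_i; A₀ⁱ, A₁ⁱ) : t_i ≥ 0, Σ_i t_i ≤ t }. -/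

import Mathlib

open MeasureTheory ENNReal Set

/-- The Peetre `K_t`-functional of a compatible couple embedded in `V`. -/
noncomputable def Kfun {V A₀ A₁ : Type*} [AddCommGroup V] [Module ℝ V]
    [NormedAddCommGroup A₀] [NormedSpace ℝ A₀] [NormedAddCommGroup A₁] [NormedSpace ℝ A₁]
    (j₀ : A₀ →ₗ[ℝ] V) (j₁ : A₁ →ₗ[ℝ] V) (t : ℝ) (v : V) : ℝ :=
  sInf {r | ∃ (a : A₀) (b : A₁), v = j₀ a + j₁ b ∧ r = ‖a‖ + t * ‖b‖}

/-!
Write `G(u)` for the supremum of `∑ K_{τ_i}(x_i)` over `τ ≥ 0` with `∑ τ_i ≤ u`. The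
inequality `G(t) ≤ K_t(x)` is termwise: `K_{τ_i}(x_i) ≤ ‖a_i‖ + τ_i sup ‖b‖` for every
decomposition `x = a + b`.

Conversely, `G` is concave (each `K_s(x_i)` is concave in `s`), so it has a supergradient `μ`
at `t`. Testing `G` on finitely supported `τ` shows that the intercepts
`α_i = sup_{s ≥ 0} (K_s(x_i) - μ s)` are summable with `∑ α_i ≤ G(t) - μ t`. For a single
couple, a line `α + μ s` above `s ↦ K_s(v)` is almost attained by one decomposition
`v = a + b` with `‖a‖ ≈ α`, `‖b‖ ≈ μ` (Hahn–Banach in `ℝ²`). Gluing these decompositions with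
errors `ε 2⁻ⁱ` gives `K_t(x) ≤ ∑ α_i + t μ + O(ε) ≤ G(t) + O(ε)`.
-/

theorem ConvexOn.exists_subgradient_of_mem_interior {S : Set ℝ} {f : ℝ → ℝ}
    (hf : ConvexOn ℝ S f) {t : ℝ} (ht : t ∈ interior S) :
    ∃ μ, ∀ w ∈ S, f t + μ * (w - t) ≤ f w := by
  refine ⟨derivWithin f (Iio t) t, fun w hw => ?_⟩
  rcases lt_trichotomy w t with hwt | rfl | htw
  · have h := hf.slope_le_leftDeriv_of_mem_interior hw ht hwt
    rw [slope_def_field, div_le_iff₀ (sub_pos.2 hwt)] at h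
    linarith
  · simp
  · have h := (hf.leftDeriv_le_rightDeriv_of_mem_interior ht).trans
      (hf.rightDeriv_le_slope_of_mem_interior ht hw htw)
    rw [slope_def_field, le_div_iff₀ (sub_pos.2 htw)] at h
    linarith

theorem ConcaveOn.exists_supergradient_of_mem_interior {S : Set ℝ} {f : ℝ → ℝ}
    (hf : ConcaveOn ℝ S f) {t : ℝ} (ht : t ∈ interior S) :
    ∃ μ, ∀ w ∈ S, f w ≤ f t + μ * (w - t) := by
  obtain ⟨μ, hμ⟩ := hf.neg.exists_subgradient_of_mem_interior ht
  refine ⟨-μ, fun w hw => ?_⟩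
  have h := hμ w hw
  simp only [Pi.neg_apply] at h
  linarith

theorem Finset.sum_ciSup_le {ι β : Type*} [Nonempty β] (f : ι → β → ℝ) (I : Finset ι) {c : ℝ}
    (h : ∀ s : ι → β, ∑ i ∈ I, f i (s i) ≤ c) : ∑ i ∈ I, ⨆ b, f i b ≤ c := by
  classical
  induction I using Finset.induction_on generalizing c with
  | empty => simpa using h (fun _ => Classical.arbitrary β)
  | insert j I hj ih =>
    rw [Finset.sum_insert hj, ← le_sub_iff_add_le]
    refine ciSup_le fun b => le_sub_comm.1 (ih fun s => ?_)
    have hs := h (Function.update s j b)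
    rw [Finset.sum_insert hj, Function.update_self] at hs
    rw [le_sub_iff_add_le']
    convert hs using 2
    exact Finset.sum_congr rfl fun i hi => by
      rw [Function.update_of_ne (ne_of_mem_of_not_mem hi hj)]

theorem nonneg_of_forall_le_add_mul {c d p : ℝ} (h : ∀ R, 0 ≤ R → c ≤ d + R * p) : 0 ≤ p := by
  by_contra! hp
  have h₀ := h 0 le_rfl
  have h₁ := h ((d - c + 1) / -p) (div_nonneg (by linarith) (by linarith))
  rw [div_mul_eq_mul_div, div_neg, mul_div_cancel_right₀ _ hp.ne] at h₁
  linarith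

section Kfunctional

variable {V A₀ A₁ : Type*} [AddCommGroup V] [Module ℝ V]
    [NormedAddCommGroup A₀] [NormedSpace ℝ A₀] [NormedAddCommGroup A₁] [NormedSpace ℝ A₁]
    {j₀ : A₀ →ₗ[ℝ] V} {j₁ : A₁ →ₗ[ℝ] V} {v : V} {t : ℝ}

theorem Kfun_nonneg (ht : 0 ≤ t) : 0 ≤ Kfun j₀ j₁ t v :=
  Real.sInf_nonneg (by rintro r ⟨a, b, -, rfl⟩; positivity)

theorem Kfun_le {a : A₀} {b : A₁} (ht : 0 ≤ t) (hab : v = j₀ a + j₁ b) :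
    Kfun j₀ j₁ t v ≤ ‖a‖ + t * ‖b‖ :=
  csInf_le ⟨0, by rintro r ⟨a, b, -, rfl⟩; positivity⟩ ⟨a, b, hab, rfl⟩

theorem le_Kfun (hv : ∃ (a : A₀) (b : A₁), v = j₀ a + j₁ b) {r : ℝ}
    (h : ∀ a b, v = j₀ a + j₁ b → r ≤ ‖a‖ + t * ‖b‖) : r ≤ Kfun j₀ j₁ t v := by
  obtain ⟨a, b, hab⟩ := hv
  exact le_csInf ⟨_, a, b, hab, rfl⟩ (by rintro _ ⟨a, b, hab, rfl⟩; exact h a b hab)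

theorem concaveOn_Kfun (hv : ∃ (a : A₀) (b : A₁), v = j₀ a + j₁ b) :
    ConcaveOn ℝ (Ici 0) (fun t => Kfun j₀ j₁ t v) := by
  refine ⟨convex_Ici 0, fun s hs s' hs' l m hl hm hlm => le_Kfun hv fun a b hab => ?_⟩
  calc l • Kfun j₀ j₁ s v + m • Kfun j₀ j₁ s' v
      ≤ l • (‖a‖ + s * ‖b‖) + m • (‖a‖ + s' * ‖b‖) := by
        gcongr
        exacts [Kfun_le hs hab, Kfun_le hs' hab]
    _ = ‖a‖ + (l • s + m • s') * ‖b‖ := by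
        simp only [smul_eq_mul]
        linear_combination ‖a‖ * hlm

theorem convex_decompositionNormBounds :
    Convex ℝ {p : ℝ × ℝ | ∃ (a : A₀) (b : A₁), v = j₀ a + j₁ b ∧ ‖a‖ ≤ p.1 ∧ ‖b‖ ≤ p.2} := by
  rintro p ⟨a, b, hab, ha, hb⟩ q ⟨a', b', hab', ha', hb'⟩ l m hl hm hlm
  refine ⟨l • a + m • a', l • b + m • b', ?_, ?_, ?_⟩
  · rw [← one_smul ℝ v, ← hlm, add_smul]
    nth_rw 1 [hab]
    rw [hab']
    simp only [map_add, map_smul, smul_add]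
    abel
  · exact ((convexOn_norm convex_univ).2 trivial trivial hl hm hlm).trans (by
      simp only [smul_eq_mul, Prod.fst_add, Prod.smul_fst]; gcongr)
  · exact ((convexOn_norm convex_univ).2 trivial trivial hl hm hlm).trans (by
      simp only [smul_eq_mul, Prod.snd_add, Prod.smul_snd]; gcongr)

/-- Separate the convex set of achievable norm pairs `(‖a‖, ‖b‖)` from the box
`(-∞, α + ε) × (-∞, μ + ε)`: if the separating functional is `(p, q) ↦ P p + Q q`, the bound
on `K_s(v)` fails at `s = Q / P`, or for large `s` when `P = 0`. -/
theorem exists_decomp_of_Kfun_le (hv : ∃ (a : A₀) (b : A₁), v = j₀ a + j₁ b) {α μ ε : ℝ}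
    (hK : ∀ s, 0 ≤ s → Kfun j₀ j₁ s v ≤ α + μ * s) (hε : 0 < ε) :
    ∃ (a : A₀) (b : A₁), v = j₀ a + j₁ b ∧ ‖a‖ < α + ε ∧ ‖b‖ < μ + ε := by
  by_contra! hno
  obtain ⟨f, u, hbox, hC⟩ := geometric_hahn_banach_open
    ((convex_Iio (α + ε)).prod (convex_Iio (μ + ε))) (isOpen_Iio.prod isOpen_Iio)
    convex_decompositionNormBounds (Set.disjoint_left.2 fun p hp ⟨a, b, hab, ha, hb⟩ =>
      (hno a b hab (ha.trans_lt hp.1)).not_gt (hb.trans_lt hp.2))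
  set P := f (1, 0)
  set Q := f (0, 1)
  have hf : ∀ p q : ℝ, f (p, q) = p * P + q * Q := fun p q => by
    rw [show ((p, q) : ℝ × ℝ) = p • ((1 : ℝ), (0 : ℝ)) + q • ((0 : ℝ), (1 : ℝ)) by simp,
      map_add, map_smul, map_smul, smul_eq_mul, smul_eq_mul]
  have hlow : ∀ a b p q, v = j₀ a + j₁ b → ‖a‖ ≤ p → ‖b‖ ≤ q → u ≤ p * P + q * Q :=
    fun a b p q hab ha hb => hf p q ▸ hC (p, q) ⟨a, b, hab, ha, hb⟩
  have hsep : ∀ a b, v = j₀ a + j₁ b → (α + ε / 2) * P + (μ + ε / 2) * Q < ‖a‖ * P + ‖b‖ * Q :=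
    fun a b hab => (hf _ _ ▸ hbox _ ⟨by simp; linarith, by simp; linarith⟩).trans_le
      (hlow a b _ _ hab le_rfl le_rfl)
  obtain ⟨a₀, b₀, h₀⟩ := hv
  have hP : 0 ≤ P := nonneg_of_forall_le_add_mul (c := u) (d := ‖a₀‖ * P + ‖b₀‖ * Q)
    fun R hR => (hlow a₀ b₀ _ _ h₀ (le_add_of_nonneg_right hR) le_rfl).trans_eq (by ring)
  have hQ : 0 ≤ Q := nonneg_of_forall_le_add_mul (c := u) (d := ‖a₀‖ * P + ‖b₀‖ * Q)
    fun R hR => (hlow a₀ b₀ _ _ h₀ le_rfl (le_add_of_nonneg_right hR)).trans_eq (by ring)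
  rcases hP.eq_or_lt with hP0 | hPpos
  · have hQpos : 0 < Q := hQ.lt_of_ne fun hQ0 => by simpa [← hP0, ← hQ0] using hsep a₀ b₀ h₀
    have hb : ∀ a b, v = j₀ a + j₁ b → μ + ε / 2 ≤ ‖b‖ := fun a b hab =>
      (lt_of_mul_lt_mul_right (by simpa [← hP0] using hsep a b hab) hQ).le
    have : 0 ≤ -(ε / 2) := nonneg_of_forall_le_add_mul (c := 0) (d := α) fun s hs => by
      have h := (le_Kfun ⟨a₀, b₀, h₀⟩ fun a b hab =>
        (mul_le_mul_of_nonneg_left (hb a b hab) hs).trans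
          (le_add_of_nonneg_left (norm_nonneg a))).trans (hK s hs)
      linarith
    linarith
  · have hs : 0 ≤ Q / P := div_nonneg hQ hPpos.le
    have h := (le_Kfun (r := (α + ε / 2) + (μ + ε / 2) * (Q / P)) ⟨a₀, b₀, h₀⟩ fun a b hab => by
      refine le_of_mul_le_mul_right ?_ hPpos
      convert (hsep a b hab).le using 1 <;> field_simp).trans (hK _ hs)
    nlinarith [mul_nonneg hε.le hs]

end Kfunctional

section Family

variable {V A₀ A₁ : ℕ → Type*} [∀ n, AddCommGroup (V n)] [∀ n, Module ℝ (V n)]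
    [∀ n, NormedAddCommGroup (A₀ n)] [∀ n, NormedSpace ℝ (A₀ n)]
    [∀ n, NormedAddCommGroup (A₁ n)] [∀ n, NormedSpace ℝ (A₁ n)]
    (j₀ : ∀ n, A₀ n →ₗ[ℝ] V n) (j₁ : ∀ n, A₁ n →ₗ[ℝ] V n) (x : ∀ n, V n)

def MemL1AddLinf : Prop :=
  ∃ (a : ∀ n, A₀ n) (b : ∀ n, A₁ n), Summable (fun i => ‖a i‖) ∧
    BddAbove (Set.range fun i => ‖b i‖) ∧ ∀ i, x i = j₀ i (a i) + j₁ i (b i)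

/-- The `K_t`-functional of `x` in the couple `(ℓ₁({A₀ⁿ}), ℓ_∞({A₁ⁿ}))`. -/
noncomputable def Kl1linf (t : ℝ) : ℝ :=
  sInf {r | ∃ (a : ∀ n, A₀ n) (b : ∀ n, A₁ n), Summable (fun i => ‖a i‖) ∧
    BddAbove (Set.range fun i => ‖b i‖) ∧ (∀ i, x i = j₀ i (a i) + j₁ i (b i)) ∧
    r = (∑' i, ‖a i‖) + t * (⨆ i, ‖b i‖)}

def KSums (u : ℝ) : Set ℝ :=
  {s | ∃ τ : ℕ → ℝ, (∀ i, 0 ≤ τ i) ∧ Summable τ ∧ (∑' i, τ i) ≤ u ∧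
    Summable (fun i => Kfun (j₀ i) (j₁ i) (τ i) (x i)) ∧
    s = ∑' i, Kfun (j₀ i) (j₁ i) (τ i) (x i)}

noncomputable def KsupSum (u : ℝ) : ℝ := sSup (KSums j₀ j₁ x u)

variable {j₀ j₁ x}

theorem exists_tsum_le_of_sum_Kfun_sub_le {μ C : ℝ}
    (h : ∀ (I : Finset ℕ) (s : ℕ → Ici (0 : ℝ)),
      ∑ i ∈ I, (Kfun (j₀ i) (j₁ i) (s i) (x i) - μ * s i) ≤ C) :
    ∃ α : ℕ → ℝ, Summable α ∧ ∑' i, α i ≤ C ∧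
      ∀ i s, 0 ≤ s → Kfun (j₀ i) (j₁ i) s (x i) ≤ α i + μ * s := by
  set f : ℕ → Ici (0 : ℝ) → ℝ := fun i s => Kfun (j₀ i) (j₁ i) s (x i) - μ * s
  have hbdd : ∀ i, BddAbove (range (f i)) := fun i =>
    ⟨C, by rintro _ ⟨s, rfl⟩; simpa [f] using h {i} fun _ => s⟩
  have hsum : ∀ I, ∑ i ∈ I, ⨆ s, f i s ≤ C := fun I => Finset.sum_ciSup_le f I (h I)
  have hα0 : ∀ i, 0 ≤ ⨆ s, f i s := fun i =>
    (by simpa [f] using Kfun_nonneg le_rfl : 0 ≤ f i ⟨0, self_mem_Ici⟩).trans (le_ciSup (hbdd i) _)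
  refine ⟨fun i => ⨆ s, f i s, summable_of_sum_le hα0 hsum, Real.tsum_le_of_sum_le hα0 hsum,
    fun i s hs => ?_⟩
  have := le_ciSup (hbdd i) ⟨s, hs⟩
  simp only [f] at this
  linarith

section Decomposition

variable {a : ∀ n, A₀ n} {b : ∀ n, A₁ n} (ha : Summable fun i => ‖a i‖)
    (hb : BddAbove (Set.range fun i => ‖b i‖)) (hab : ∀ i, x i = j₀ i (a i) + j₁ i (b i))
    {τ : ℕ → ℝ} (hτ0 : ∀ i, 0 ≤ τ i) (hτ : Summable τ)

include hb hab hτ0 in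
theorem Kfun_le_norm_add_mul_iSup (i : ℕ) :
    Kfun (j₀ i) (j₁ i) (τ i) (x i) ≤ ‖a i‖ + τ i * ⨆ i, ‖b i‖ :=
  (Kfun_le (hτ0 i) (hab i)).trans (by gcongr; exacts [hτ0 i, le_ciSup hb i])

include ha hb hab hτ0 hτ in
theorem summable_Kfun_of_decomp : Summable fun i => Kfun (j₀ i) (j₁ i) (τ i) (x i) :=
  .of_nonneg_of_le (fun i => Kfun_nonneg (hτ0 i)) (Kfun_le_norm_add_mul_iSup hb hab hτ0)
    (ha.add (hτ.mul_right _))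

include ha hb hab hτ0 hτ in
theorem tsum_Kfun_le_of_decomp :
    ∑' i, Kfun (j₀ i) (j₁ i) (τ i) (x i) ≤ (∑' i, ‖a i‖) + (∑' i, τ i) * ⨆ i, ‖b i‖ := by
  rw [← tsum_mul_right, ← ha.tsum_add (hτ.mul_right _)]
  exact (summable_Kfun_of_decomp ha hb hab hτ0 hτ).tsum_le_tsum
    (Kfun_le_norm_add_mul_iSup hb hab hτ0) (ha.add (hτ.mul_right _))

end Decomposition

namespace MemL1AddLinf

variable (hx : MemL1AddLinf j₀ j₁ x)
include hx

theorem exists_decomp (i : ℕ) : ∃ (a : A₀ i) (b : A₁ i), x i = j₀ i a + j₁ i b :=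
  let ⟨a, b, _, _, hab⟩ := hx; ⟨a i, b i, hab i⟩

theorem summable_Kfun {τ : ℕ → ℝ} (hτ0 : ∀ i, 0 ≤ τ i) (hτ : Summable τ) :
    Summable fun i => Kfun (j₀ i) (j₁ i) (τ i) (x i) :=
  let ⟨_, _, ha, hb, hab⟩ := hx; summable_Kfun_of_decomp ha hb hab hτ0 hτ

theorem KSums_nonempty {u : ℝ} (hu : 0 ≤ u) : (KSums j₀ j₁ x u).Nonempty :=
  ⟨_, 0, fun _ => le_rfl, summable_zero, by simpa using hu,
    hx.summable_Kfun (fun _ => le_rfl) summable_zero, rfl⟩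

theorem bddAbove_KSums (u : ℝ) : BddAbove (KSums j₀ j₁ x u) := by
  obtain ⟨a, b, ha, hb, hab⟩ := hx
  refine ⟨(∑' i, ‖a i‖) + u * ⨆ i, ‖b i‖, ?_⟩
  rintro _ ⟨τ, hτ0, hτ, hτu, -, rfl⟩
  refine (tsum_Kfun_le_of_decomp ha hb hab hτ0 hτ).trans ?_
  gcongr
  exact Real.iSup_nonneg fun i => norm_nonneg _

theorem tsum_Kfun_le_KsupSum {τ : ℕ → ℝ} (hτ0 : ∀ i, 0 ≤ τ i) (hτ : Summable τ) {u : ℝ}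
    (hτu : ∑' i, τ i ≤ u) : ∑' i, Kfun (j₀ i) (j₁ i) (τ i) (x i) ≤ KsupSum j₀ j₁ x u :=
  le_csSup (hx.bddAbove_KSums u) ⟨τ, hτ0, hτ, hτu, hx.summable_Kfun hτ0 hτ, rfl⟩

theorem concaveOn_KsupSum : ConcaveOn ℝ (Ici 0) (KsupSum j₀ j₁ x) := by
  refine ⟨convex_Ici 0, fun u hu w hw l m hl hm hlm => ?_⟩
  have hcomb : ∀ s ∈ KSums j₀ j₁ x u, ∀ s' ∈ KSums j₀ j₁ x w,
      l * s + m * s' ≤ KsupSum j₀ j₁ x (l • u + m • w) := by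
    rintro _ ⟨τ, hτ0, hτ, hτu, hKτ, rfl⟩ _ ⟨σ, hσ0, hσ, hσw, hKσ, rfl⟩
    have hρ0 : ∀ i, 0 ≤ l * τ i + m * σ i := fun i => by have := hτ0 i; have := hσ0 i; positivity
    have hρ : Summable fun i => l * τ i + m * σ i := (hτ.mul_left l).add (hσ.mul_left m)
    calc l * ∑' i, Kfun (j₀ i) (j₁ i) (τ i) (x i) + m * ∑' i, Kfun (j₀ i) (j₁ i) (σ i) (x i)
        = ∑' i, (l • Kfun (j₀ i) (j₁ i) (τ i) (x i) + m • Kfun (j₀ i) (j₁ i) (σ i) (x i)) := by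
          simp only [smul_eq_mul]
          rw [(hKτ.mul_left l).tsum_add (hKσ.mul_left m), tsum_mul_left, tsum_mul_left]
      _ ≤ ∑' i, Kfun (j₀ i) (j₁ i) (l • τ i + m • σ i) (x i) :=
          ((hKτ.mul_left l).add (hKσ.mul_left m)).tsum_le_tsum
            (fun i => (concaveOn_Kfun (hx.exists_decomp i)).2 (hτ0 i) (hσ0 i) hl hm hlm)
            (hx.summable_Kfun hρ0 hρ)
      _ ≤ KsupSum j₀ j₁ x (l • u + m • w) := by
          refine hx.tsum_Kfun_le_KsupSum hρ0 hρ ?_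
          rw [(hτ.mul_left l).tsum_add (hσ.mul_left m), tsum_mul_left, tsum_mul_left]
          simp only [smul_eq_mul]
          gcongr
  unfold KsupSum
  rw [← Real.sSup_smul_of_nonneg hl, ← Real.sSup_smul_of_nonneg hm, ← csSup_add ((hx.KSums_nonempty hu).smul_set)
      ((hx.bddAbove_KSums u).smul_of_nonneg hl) ((hx.KSums_nonempty hw).smul_set)
      ((hx.bddAbove_KSums w).smul_of_nonneg hm)]
  refine csSup_le (((hx.KSums_nonempty hu).smul_set).add (hx.KSums_nonempty hw).smul_set) ?_
  rintro _ ⟨_, ⟨s, hs, rfl⟩, _, ⟨s', hs', rfl⟩, rfl⟩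
  exact hcomb s hs s' hs'

theorem sum_Kfun_sub_le {t μ : ℝ}
    (hμ : ∀ w ∈ Ici 0, KsupSum j₀ j₁ x w ≤ KsupSum j₀ j₁ x t + μ * (w - t))
    (I : Finset ℕ) (s : ℕ → Ici (0 : ℝ)) :
    ∑ i ∈ I, (Kfun (j₀ i) (j₁ i) (s i) (x i) - μ * s i) ≤ KsupSum j₀ j₁ x t - μ * t := by
  classical
  set τ : ℕ → ℝ := fun i => if i ∈ I then (s i : ℝ) else 0
  have hτ0 : ∀ i, 0 ≤ τ i := fun i => by by_cases hi : i ∈ I <;> simp [τ, hi, (s i).2.out]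
  have hτI : ∀ i ∉ I, τ i = 0 := fun i hi => if_neg hi
  have hτ : Summable τ := summable_of_ne_finset_zero hτI
  have hτsum : ∑' i, τ i = ∑ i ∈ I, (s i : ℝ) :=
    (tsum_eq_sum hτI).trans (Finset.sum_congr rfl fun i hi => if_pos hi)
  have hK : ∑ i ∈ I, Kfun (j₀ i) (j₁ i) (s i) (x i) ≤ ∑' i, Kfun (j₀ i) (j₁ i) (τ i) (x i) :=
    (Finset.sum_congr rfl fun i hi => by simp [τ, hi]).trans_le
      ((hx.summable_Kfun hτ0 hτ).sum_le_tsum I fun i _ => Kfun_nonneg (hτ0 i))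
  have h := (hK.trans (hx.tsum_Kfun_le_KsupSum hτ0 hτ le_rfl)).trans (hμ _ (tsum_nonneg hτ0))
  rw [hτsum] at h
  rw [Finset.sum_sub_distrib, ← Finset.mul_sum]
  linarith

theorem Kl1linf_le_tsum_add_mul {α : ℕ → ℝ} {μ t : ℝ} (hα : Summable α)
    (hK : ∀ i s, 0 ≤ s → Kfun (j₀ i) (j₁ i) s (x i) ≤ α i + μ * s) (ht : 0 ≤ t) :
    Kl1linf j₀ j₁ x t ≤ ∑' i, α i + t * μ := by
  refine le_of_forall_pos_le_add fun ε hε => ?_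
  set δ := ε / (2 + t)
  have hδ : 0 < δ := by positivity
  have hgeo : HasSum (fun i : ℕ => δ * (1 / 2) ^ i) (δ * 2) := hasSum_geometric_two.mul_left δ
  choose a b hab ha hb using fun i =>
    exists_decomp_of_Kfun_le (hx.exists_decomp i) (hK i) (by positivity : 0 < δ * (1 / 2) ^ i)
  have ha_sum : Summable fun i => ‖a i‖ :=
    .of_nonneg_of_le (fun i => norm_nonneg _) (fun i => (ha i).le) (hα.add hgeo.summable)
  have hb_le : ∀ i, ‖b i‖ ≤ μ + δ := fun i => (hb i).le.trans (by
    gcongr; exact mul_le_of_le_one_right hδ.le (pow_le_one₀ (by norm_num) (by norm_num)))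
  have hbdd : BddAbove (range fun i => ‖b i‖) := ⟨μ + δ, by rintro _ ⟨i, rfl⟩; exact hb_le i⟩
  calc Kl1linf j₀ j₁ x t ≤ ∑' i, ‖a i‖ + t * ⨆ i, ‖b i‖ :=
        csInf_le ⟨0, by
          rintro _ ⟨a, b, -, -, -, rfl⟩
          exact add_nonneg (tsum_nonneg fun i => norm_nonneg _)
            (mul_nonneg ht (Real.iSup_nonneg fun i => norm_nonneg _))⟩
          ⟨a, b, ha_sum, hbdd, hab, rfl⟩
    _ ≤ (∑' i, α i + δ * 2) + t * (μ + δ) := by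
        gcongr
        · rw [← hgeo.tsum_eq, ← hα.tsum_add hgeo.summable]
          exact ha_sum.tsum_le_tsum (fun i => (ha i).le) (hα.add hgeo.summable)
        · exact ciSup_le hb_le
    _ = ∑' i, α i + t * μ + ε := by
        simp only [δ]
        field_simp
        ring

theorem Kl1linf_le_KsupSum {t : ℝ} (ht : 0 < t) : Kl1linf j₀ j₁ x t ≤ KsupSum j₀ j₁ x t := by
  obtain ⟨μ, hμ⟩ :=
    hx.concaveOn_KsupSum.exists_supergradient_of_mem_interior (t := t) (by rwa [interior_Ici])
  obtain ⟨α, hα, hαC, hK⟩ := exists_tsum_le_of_sum_Kfun_sub_le (hx.sum_Kfun_sub_le hμ)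
  linarith [hx.Kl1linf_le_tsum_add_mul hα hK ht.le]

theorem KsupSum_le_Kl1linf {t : ℝ} (ht : 0 ≤ t) : KsupSum j₀ j₁ x t ≤ Kl1linf j₀ j₁ x t := by
  refine csSup_le (hx.KSums_nonempty ht) ?_
  rintro _ ⟨τ, hτ0, hτ, hτt, -, rfl⟩
  obtain ⟨a₀, b₀, ha₀, hb₀, hab₀⟩ := hx
  refine le_csInf ⟨_, a₀, b₀, ha₀, hb₀, hab₀, rfl⟩ ?_
  rintro _ ⟨a, b, ha, hb, hab, rfl⟩
  refine (tsum_Kfun_le_of_decomp ha hb hab hτ0 hτ).trans ?_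
  gcongr
  exact Real.iSup_nonneg fun i => norm_nonneg _

end MemL1AddLinf

end Family

theorem Kl1linf_family_eq_KsupSum_general
    {V : ℕ → Type*} {A₀ A₁ : ℕ → Type*}
    [∀ n, AddCommGroup (V n)] [∀ n, Module ℝ (V n)]
    [∀ n, NormedAddCommGroup (A₀ n)] [∀ n, NormedSpace ℝ (A₀ n)]
    [∀ n, NormedAddCommGroup (A₁ n)] [∀ n, NormedSpace ℝ (A₁ n)]
    (j₀ : ∀ n, A₀ n →ₗ[ℝ] V n) (j₁ : ∀ n, A₁ n →ₗ[ℝ] V n)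
    (x : ∀ n, V n)
    -- `x ∈ ℓ₁({A₀ⁿ}) + ℓ_∞({A₁ⁿ})`:
    (hx : ∃ (a : ∀ n, A₀ n) (b : ∀ n, A₁ n), Summable (fun i => ‖a i‖) ∧
        BddAbove (Set.range fun i => ‖b i‖) ∧ ∀ i, x i = j₀ i (a i) + j₁ i (b i))
    (t : ℝ) (ht : 0 < t) :
    sInf {r | ∃ (a : ∀ n, A₀ n) (b : ∀ n, A₁ n), Summable (fun i => ‖a i‖) ∧
        BddAbove (Set.range fun i => ‖b i‖) ∧ (∀ i, x i = j₀ i (a i) + j₁ i (b i)) ∧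
        r = (∑' i, ‖a i‖) + t * (⨆ i, ‖b i‖)} =
    sSup {s | ∃ τ : ℕ → ℝ, (∀ i, 0 ≤ τ i) ∧ Summable τ ∧ (∑' i, τ i) ≤ t ∧
        Summable (fun i => Kfun (j₀ i) (j₁ i) (τ i) (x i)) ∧
        s = ∑' i, Kfun (j₀ i) (j₁ i) (τ i) (x i)} :=
  le_antisymm (MemL1AddLinf.Kl1linf_le_KsupSum hx ht) (MemL1AddLinf.KsupSum_le_Kl1linf hx ht.le)

/-- Remark 4: the formula for the `K_t`-functional of the couple
`(ℓ₁({A₀ⁿ}), ℓ_∞({A₁ⁿ}))` of direct sums of families of Banach spaces. -/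
theorem Kl1linf_family_eq_KsupSum
    {V : ℕ → Type*} {A₀ A₁ : ℕ → Type*}
    [∀ n, AddCommGroup (V n)] [∀ n, Module ℝ (V n)] [∀ n, TopologicalSpace (V n)]
    [∀ n, IsTopologicalAddGroup (V n)] [∀ n, ContinuousSMul ℝ (V n)] [∀ n, T2Space (V n)]
    [∀ n, NormedAddCommGroup (A₀ n)] [∀ n, NormedSpace ℝ (A₀ n)] [∀ n, CompleteSpace (A₀ n)]
    [∀ n, NormedAddCommGroup (A₁ n)] [∀ n, NormedSpace ℝ (A₁ n)] [∀ n, CompleteSpace (A₁ n)]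
    (j₀ : ∀ n, A₀ n →ₗ[ℝ] V n) (j₁ : ∀ n, A₁ n →ₗ[ℝ] V n)
    (hc₀ : ∀ n, Continuous (j₀ n)) (hc₁ : ∀ n, Continuous (j₁ n))
    (hi₀ : ∀ n, Function.Injective (j₀ n)) (hi₁ : ∀ n, Function.Injective (j₁ n))
    (x : ∀ n, V n)
    -- `x ∈ ℓ₁({A₀ⁿ}) + ℓ_∞({A₁ⁿ})`:
    (hx : ∃ (a : ∀ n, A₀ n) (b : ∀ n, A₁ n), Summable (fun i => ‖a i‖) ∧
        BddAbove (Set.range fun i => ‖b i‖) ∧ ∀ i, x i = j₀ i (a i) + j₁ i (b i))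
    (t : ℝ) (ht : 0 < t) :
    sInf {r | ∃ (a : ∀ n, A₀ n) (b : ∀ n, A₁ n), Summable (fun i => ‖a i‖) ∧
        BddAbove (Set.range fun i => ‖b i‖) ∧ (∀ i, x i = j₀ i (a i) + j₁ i (b i)) ∧
        r = (∑' i, ‖a i‖) + t * (⨆ i, ‖b i‖)} =
    sSup {s | ∃ τ : ℕ → ℝ, (∀ i, 0 ≤ τ i) ∧ Summable τ ∧ (∑' i, τ i) ≤ t ∧
        Summable (fun i => Kfun (j₀ i) (j₁ i) (τ i) (x i)) ∧
        s = ∑' i, Kfun (j₀ i) (j₁ i) (τ i) (x i)} :=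
  Kl1linf_family_eq_KsupSum_general j₀ j₁ x hx t ht
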